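/- Let N ≡ 0 (mod 4). Then there exist no T, R ∈ SL(2,Z_{2N}) ⋉_ψ Z_N² satisfying simultaneously: (a) their matrix components reduce mod N to [[1,1],[0,1]] and [[1,0],[-1,1]] respectively; (b) T^N, R^N ∈ K; (c) T^k R^ℓ (R^ℓ T^k)⁻¹ ∈ K for all k,ℓ with N = kℓ and gcd(k,ℓ) = 1; (d) (T^k R^ℓ T^k)²(TRT)⁻² ∈ K for all 1 ≤ k,ℓ ≤ N−1 with kℓ ≡ 1 (mod N); (e) T^k R^ℓ T^k (R^ℓ T^k R^ℓ)⁻¹ ∈ K for all 1 ≤ k,ℓ ≤ N−1 with kℓ ≡ 1 (mod N). -/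

import Mathlib

open Matrix

abbrev SL2 (m : ℕ) := Matrix.SpecialLinearGroup (Fin 2) (ZMod m)

/-- Entrywise reduction mod `N` of a matrix over `ZMod (2*N)`. -/
def redMat (N : ℕ) (M : Matrix (Fin 2) (Fin 2) (ZMod (2*N))) :
    Matrix (Fin 2) (Fin 2) (ZMod N) :=
  M.map (ZMod.castHom (dvd_mul_left N 2) (ZMod N))

/-- Underlying set of the semidirect product `SL(2, Z_{2N}) ⋉_ψ Z_N²`. -/
abbrev SG (N : ℕ) := SL2 (2*N) × (Fin 2 → ZMod N)

/-- Multiplication of the semidirect product `SL(2, Z_{2N}) ⋉_ψ Z_N²`,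
`(x,h)·(y,g) = (xy, h + [x]_N · g)`. -/
def smul' (N : ℕ) (S P : SG N) : SG N :=
  (S.1 * P.1, S.2 + (redMat N (S.1 : Matrix (Fin 2) (Fin 2) (ZMod (2*N)))).mulVec P.2)

/-- `k`-th power in the semidirect product. -/
def spow (N : ℕ) : SG N → ℕ → SG N
  | _, 0 => (1, 0)
  | S, k+1 => smul' N S (spow N S k)

/-- Inverse in the semidirect product: `(C,w)⁻¹ = (C⁻¹, -[C⁻¹]_N · w)`. -/
def sinv (N : ℕ) (P : SG N) : SG N :=
  (P.1⁻¹, -(redMat N ((P.1⁻¹ : SL2 (2*N)) : Matrix (Fin 2) (Fin 2) (ZMod (2*N)))).mulVec P.2)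

/-- The 8-element subgroup `K`. -/
def Kgrp (N : ℕ) : Set (SG N) :=
  { g | ∃ r s t : ℕ, r ≤ 1 ∧ s ≤ 1 ∧ t ≤ 1 ∧
      (g.1 : Matrix (Fin 2) (Fin 2) (ZMod (2*N))) =
        !![((1 + N*r : ℕ) : ZMod (2*N)), ((N*s : ℕ) : ZMod (2*N));
           ((N*t : ℕ) : ZMod (2*N)), ((1 + N*r : ℕ) : ZMod (2*N))] ∧
      g.2 = ![((N/2*s : ℕ) : ZMod N), ((N/2*t : ℕ) : ZMod N)] }

private lemma mulVec2 {m : ℕ} (a b c d : ZMod m) (v : Fin 2 → ZMod m) :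
    (!![a, b; c, d]).mulVec v = ![a * v 0 + b * v 1, c * v 0 + d * v 1] := by
  funext i
  fin_cases i <;> simp [Matrix.mulVec, dotProduct, Fin.sum_univ_two]

private lemma redMat_mul (N : ℕ) (X Y : Matrix (Fin 2) (Fin 2) (ZMod (2*N))) :
    redMat N (X * Y) = redMat N X * redMat N Y := by
  unfold redMat; exact Matrix.map_mul

private lemma redMat_adjugate (N : ℕ) (X : Matrix (Fin 2) (Fin 2) (ZMod (2*N))) :
    redMat N X.adjugate = (redMat N X).adjugate := by
  unfold redMat
  simpa [RingHom.mapMatrix_apply] using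
    (RingHom.map_adjugate (ZMod.castHom (dvd_mul_left N 2) (ZMod N)) X)

private lemma lift_ker (N : ℕ) [NeZero N] (e : ZMod (2*N))
    (h : ZMod.castHom (dvd_mul_left N 2) (ZMod N) e = 0) :
    ∃ u : ZMod (2*N), e = (N : ZMod (2*N)) * u := by
  haveI : NeZero (2*N) := ⟨by have := NeZero.ne N; omega⟩
  have h1 : ((e.val : ℕ) : ZMod N) = 0 := by
    rw [ZMod.natCast_val]; exact (ZMod.castHom_apply e).symm.trans h
  obtain ⟨c, hc⟩ := (ZMod.natCast_eq_zero_iff _ _).mp h1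
  refine ⟨(c : ZMod (2*N)), ?_⟩
  conv_lhs => rw [← ZMod.natCast_zmod_val e]
  rw [hc]; push_cast; ring

private lemma spow_one (N : ℕ) (S : SG N) : spow N S 1 = S := by
  show smul' N S (1, 0) = S
  unfold smul'
  simp

private lemma spow_formula (N : ℕ) (T : SG N) (u1 u2 u3 u4 : ZMod (2*N))
    (hnn : (N : ZMod (2*N)) * (N : ZMod (2*N)) = 0)
    (hA : ((T.1 : SL2 (2*N)) : Matrix (Fin 2) (Fin 2) (ZMod (2*N))) =
      !![1 + (N : ZMod (2*N)) * u1, 1 + (N : ZMod (2*N)) * u2;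
         (N : ZMod (2*N)) * u3, 1 + (N : ZMod (2*N)) * u4])
    (hred : redMat N (T.1 : Matrix (Fin 2) (Fin 2) (ZMod (2*N))) = !![1, 1; 0, 1]) :
    ∀ k : ℕ,
      ((spow N T k).1 : Matrix (Fin 2) (Fin 2) (ZMod (2*N))) =
        !![1 + (k.choose 2 : ZMod (2*N)) * ((N : ZMod (2*N)) * u3)
             + (k : ZMod (2*N)) * ((N : ZMod (2*N)) * u1),
           (k : ZMod (2*N)) + (k : ZMod (2*N)) * ((N : ZMod (2*N)) * u2)
             + (((k+1).choose 3 : ℕ) : ZMod (2*N)) * ((N : ZMod (2*N)) * u3);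
           (k : ZMod (2*N)) * ((N : ZMod (2*N)) * u3),
           1 + (k.choose 2 : ZMod (2*N)) * ((N : ZMod (2*N)) * u3)
             + (k : ZMod (2*N)) * ((N : ZMod (2*N)) * u4)] ∧
      (spow N T k).2 = ![(k : ZMod N) * T.2 0 + (k.choose 2 : ZMod N) * T.2 1,
                         (k : ZMod N) * T.2 1] := by
  have hdet : (1 + (N:ZMod (2*N))*u1) * (1 + (N:ZMod (2*N))*u4)
      - (1 + (N:ZMod (2*N))*u2) * ((N:ZMod (2*N))*u3) = 1 := by
    have hd := T.1.property
    rw [hA, Matrix.det_fin_two_of] at hd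
    exact hd
  intro k
  induction k with
  | zero =>
    constructor
    · show ((1 : SL2 (2*N)) : Matrix (Fin 2) (Fin 2) (ZMod (2*N))) = _
      rw [Matrix.SpecialLinearGroup.coe_one, Matrix.one_fin_two]
      norm_num [Nat.choose_eq_zero_of_lt]
    · show (0 : Fin 2 → ZMod N) = _
      funext i; fin_cases i <;> simp
  | succ k ih =>
    obtain ⟨ihM, ihV⟩ := ih
    have e2 : (k+1).choose 2 = k.choose 2 + k := by
      rw [Nat.choose_succ_succ, Nat.choose_one_right]; norm_num; omega
    have e3 : (k+1+1).choose 3 = (k+1).choose 3 + (k.choose 2 + k) := by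
      rw [Nat.choose_succ_succ (k+1) 2, e2]; norm_num; omega
    constructor
    · have h1 : ((spow N T (k+1)).1 : Matrix (Fin 2) (Fin 2) (ZMod (2*N)))
          = ((T.1 : SL2 (2*N)) : Matrix (Fin 2) (Fin 2) (ZMod (2*N)))
            * (((spow N T k).1 : SL2 (2*N)) : Matrix (Fin 2) (Fin 2) (ZMod (2*N))) := rfl
      rw [h1, hA, ihM, Matrix.mul_fin_two, e2, e3]
      ext i j
      fin_cases i <;> fin_cases j <;>
        simp only [Fin.zero_eta, Fin.mk_one, Matrix.of_apply, Matrix.cons_val_zero,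
          Matrix.cons_val_one, Matrix.head_cons, Fin.isValue] <;>
        push_cast
      · linear_combination ((k:ZMod (2*N))*u2*u3 + (k.choose 2 : ZMod (2*N))*u1*u3
          + (k:ZMod (2*N))*u1*u1) * hnn
      · linear_combination (k:ZMod (2*N))*hdet
          + ((k:ZMod (2*N))*u2*u4 + (k.choose 2 : ZMod (2*N))*u2*u3 + (k:ZMod (2*N))*u2*u3
             - (k:ZMod (2*N))*u1*u4 + (((k+1).choose 3 : ℕ) : ZMod (2*N))*u1*u3
             + (k:ZMod (2*N))*u1*u2) * hnn
      · linear_combination ((k:ZMod (2*N))*u3*u4 + (k.choose 2 : ZMod (2*N))*u3*u3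
          + (k:ZMod (2*N))*u1*u3) * hnn
      · linear_combination ((k:ZMod (2*N))*u4*u4 + (k.choose 2 : ZMod (2*N))*u3*u4
          + (((k+1).choose 3 : ℕ) : ZMod (2*N))*u3*u3 + (k:ZMod (2*N))*u2*u3) * hnn
    · have h2 : (spow N T (k+1)).2
          = T.2 + (redMat N (T.1 : Matrix (Fin 2) (Fin 2) (ZMod (2*N)))).mulVec
              (spow N T k).2 := rfl
      rw [h2, hred, ihV, mulVec2, e2]
      funext i
      fin_cases i <;>
        simp only [Fin.zero_eta, Fin.mk_one, Pi.add_apply, Matrix.cons_val_zero,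
          Matrix.cons_val_one, Matrix.head_cons, Fin.isValue] <;>
        push_cast <;> ring


/-- Theorem 12.1 (key computation): for `N ≡ 0 (mod 4)` there are no `T`, `R`
in `SL(2,Z_{2N}) ⋉_ψ Z_N²` satisfying conditions (a)–(e). -/
theorem no_splitting_of_N_mod_four (N : ℕ) (hN4 : N % 4 = 0) (hNpos : 0 < N) :
    ¬ ∃ T R : SG N,
      (redMat N (T.1 : Matrix (Fin 2) (Fin 2) (ZMod (2*N))) = !![1, 1; 0, 1] ∧
       redMat N (R.1 : Matrix (Fin 2) (Fin 2) (ZMod (2*N))) = !![1, 0; -1, 1]) ∧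
      (spow N T N ∈ Kgrp N ∧ spow N R N ∈ Kgrp N) ∧
      (∀ k l : ℕ, N = k * l → Nat.gcd k l = 1 →
        smul' N (smul' N (spow N T k) (spow N R l))
          (sinv N (smul' N (spow N R l) (spow N T k))) ∈ Kgrp N) ∧
      (∀ k l : ℕ, 1 ≤ k → k ≤ N - 1 → 1 ≤ l → l ≤ N - 1 → k * l ≡ 1 [MOD N] →
        smul' N
          (spow N (smul' N (smul' N (spow N T k) (spow N R l)) (spow N T k)) 2)
          (sinv N (spow N (smul' N (smul' N T R) T) 2)) ∈ Kgrp N) ∧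
      (∀ k l : ℕ, 1 ≤ k → k ≤ N - 1 → 1 ≤ l → l ≤ N - 1 → k * l ≡ 1 [MOD N] →
        smul' N
          (smul' N (smul' N (spow N T k) (spow N R l)) (spow N T k))
          (sinv N
            (smul' N (smul' N (spow N R l) (spow N T k)) (spow N R l))) ∈ Kgrp N) := by
  obtain ⟨q, rfl⟩ : ∃ q, N = 4 * q := ⟨N / 4, by omega⟩
  have hq : 0 < q := by omega
  haveI : NeZero (4*q) := ⟨by omega⟩
  rintro ⟨T, R, ⟨hTa, hRa⟩, ⟨hTb, -⟩, -, -, he⟩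
  -- basic facts about n := (4*q : ZMod (8*q))
  have hnn : ((4*q:ℕ) : ZMod (2*(4*q))) * ((4*q:ℕ) : ZMod (2*(4*q))) = 0 := by
    rw [← Nat.cast_mul, ZMod.natCast_eq_zero_iff]
    exact ⟨2*q, by ring⟩
  have h2n : ((4*q:ℕ) : ZMod (2*(4*q))) + ((4*q:ℕ) : ZMod (2*(4*q))) = 0 := by
    rw [← Nat.cast_add, show 4*q + 4*q = 2*(4*q) by ring, ZMod.natCast_self]
  have hn0 : ((4*q:ℕ) : ZMod (2*(4*q))) ≠ 0 := by
    rw [Ne, ZMod.natCast_eq_zero_iff]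
    intro hdvd; have := Nat.le_of_dvd (by omega) hdvd; omega
  -- entries of T
  have hget : ∀ (M : SL2 (2*(4*q))) (i j : Fin 2) (c : ZMod (2*(4*q))),
      ZMod.castHom (dvd_mul_left (4*q) 2) (ZMod (4*q))
        ((M : Matrix (Fin 2) (Fin 2) (ZMod (2*(4*q)))) i j)
        = ZMod.castHom (dvd_mul_left (4*q) 2) (ZMod (4*q)) c →
      ∃ u : ZMod (2*(4*q)),
        (M : Matrix (Fin 2) (Fin 2) (ZMod (2*(4*q)))) i j
          = c + ((4*q:ℕ) : ZMod (2*(4*q))) * u := by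
    intro M i j c h
    obtain ⟨u, hu⟩ := lift_ker (4*q)
      ((M : Matrix (Fin 2) (Fin 2) (ZMod (2*(4*q)))) i j - c)
      (by rw [_root_.map_sub, h, sub_self])
    exact ⟨u, by linear_combination hu⟩
  have hTent : ∀ i j : Fin 2,
      ZMod.castHom (dvd_mul_left (4*q) 2) (ZMod (4*q))
        ((T.1 : Matrix (Fin 2) (Fin 2) (ZMod (2*(4*q)))) i j)
        = !![1, 1; 0, 1] i j := by
    intro i j
    have := congr_fun (congr_fun hTa i) j
    simpa [redMat] using this
  have hRent : ∀ i j : Fin 2,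
      ZMod.castHom (dvd_mul_left (4*q) 2) (ZMod (4*q))
        ((R.1 : Matrix (Fin 2) (Fin 2) (ZMod (2*(4*q)))) i j)
        = !![1, 0; -1, 1] i j := by
    intro i j
    have := congr_fun (congr_fun hRa i) j
    simpa [redMat] using this
  obtain ⟨u1, hu1⟩ := hget T.1 0 0 1 (by rw [hTent 0 0, _root_.map_one]; simp)
  obtain ⟨u2, hu2⟩ := hget T.1 0 1 1 (by rw [hTent 0 1, _root_.map_one]; simp)
  obtain ⟨u3, hu3⟩ := hget T.1 1 0 0 (by rw [hTent 1 0, _root_.map_zero]; simp)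
  obtain ⟨u4, hu4⟩ := hget T.1 1 1 1 (by rw [hTent 1 1, _root_.map_one]; simp)
  obtain ⟨v1, hv1'⟩ := hget R.1 0 0 1 (by rw [hRent 0 0, _root_.map_one]; simp)
  obtain ⟨v2, hv2'⟩ := hget R.1 0 1 0 (by rw [hRent 0 1, _root_.map_zero]; simp)
  obtain ⟨v3, hv3'⟩ := hget R.1 1 0 (-1) (by rw [hRent 1 0, _root_.map_neg, _root_.map_one]; simp)
  obtain ⟨v4, hv4'⟩ := hget R.1 1 1 1 (by rw [hRent 1 1, _root_.map_one]; simp)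
  have hA : ((T.1 : SL2 (2*(4*q))) : Matrix (Fin 2) (Fin 2) (ZMod (2*(4*q)))) =
      !![1 + ((4*q:ℕ) : ZMod (2*(4*q))) * u1, 1 + ((4*q:ℕ) : ZMod (2*(4*q))) * u2;
         0 + ((4*q:ℕ) : ZMod (2*(4*q))) * u3, 1 + ((4*q:ℕ) : ZMod (2*(4*q))) * u4] := by
    conv_lhs => rw [Matrix.eta_fin_two
      ((T.1 : SL2 (2*(4*q))) : Matrix (Fin 2) (Fin 2) (ZMod (2*(4*q))))]
    rw [hu1, hu2, hu3, hu4]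
  have hB : ((R.1 : SL2 (2*(4*q))) : Matrix (Fin 2) (Fin 2) (ZMod (2*(4*q)))) =
      !![1 + ((4*q:ℕ) : ZMod (2*(4*q))) * v1, 0 + ((4*q:ℕ) : ZMod (2*(4*q))) * v2;
         -1 + ((4*q:ℕ) : ZMod (2*(4*q))) * v3, 1 + ((4*q:ℕ) : ZMod (2*(4*q))) * v4] := by
    conv_lhs => rw [Matrix.eta_fin_two
      ((R.1 : SL2 (2*(4*q))) : Matrix (Fin 2) (Fin 2) (ZMod (2*(4*q))))]
    rw [hv1', hv2', hv3', hv4']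
  simp only [zero_add] at hA hB
  -- choose-facts
  have hch2 : (4*q).choose 2 = 2*q*(4*q-1) := by
    rw [Nat.choose_two_right, show 4*q*(4*q-1) = 2*(2*q*(4*q-1)) by ring]
    exact Nat.mul_div_cancel_left _ (by norm_num)
  have hC2 : (((4*q).choose 2 : ℕ) : ZMod (2*(4*q))) * ((4*q:ℕ) : ZMod (2*(4*q))) = 0 := by
    rw [hch2, ← Nat.cast_mul, ZMod.natCast_eq_zero_iff]
    exact ⟨q*(4*q-1), by ring⟩
  have hdesc : (4*q+1).descFactorial 3 = (4*q-1)*((4*q)*(4*q+1)) := by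
    simp only [Nat.descFactorial_succ, Nat.descFactorial_zero, Nat.sub_zero, mul_one]
    rw [show 4*q+1-2 = 4*q-1 by omega, show 4*q+1-1 = 4*q by omega]
  have hdvd6 : 6 ∣ (4*q-1)*((4*q)*(4*q+1)) := by
    have h := Nat.factorial_dvd_descFactorial (4*q+1) 3
    rwa [hdesc, show Nat.factorial 3 = 6 by norm_num [Nat.factorial]] at h
  have hchoose6 : (4*q+1).choose 3 * 6 = (4*q-1)*((4*q)*(4*q+1)) := by
    rw [Nat.choose_eq_descFactorial_div_factorial,
      show Nat.factorial 3 = 6 by norm_num [Nat.factorial], hdesc,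
      Nat.div_mul_cancel hdvd6]
  have hXeven : 2 ∣ (4*q+1).choose 3 := by
    refine (Nat.Coprime.dvd_of_dvd_mul_right (show Nat.Coprime 2 3 by norm_num) ?_)
    have h23 : (4*q+1).choose 3 * 3 * 2 = (2*(q*((4*q-1)*(4*q+1))))*2 := by
      calc (4*q+1).choose 3 * 3 * 2 = (4*q+1).choose 3 * 6 := by ring
        _ = (4*q-1)*((4*q)*(4*q+1)) := hchoose6
        _ = (2*(q*((4*q-1)*(4*q+1))))*2 := by ring
    exact ⟨_, Nat.eq_of_mul_eq_mul_right (by norm_num) h23⟩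
  have hC3 : (((4*q+1).choose 3 : ℕ) : ZMod (2*(4*q))) * ((4*q:ℕ) : ZMod (2*(4*q))) = 0 := by
    obtain ⟨y, hy⟩ := hXeven
    rw [hy, ← Nat.cast_mul, ZMod.natCast_eq_zero_iff]
    exact ⟨y, by ring⟩
  have hadd2q : ((2*q:ℕ) : ZMod (4*q)) + ((2*q:ℕ) : ZMod (4*q)) = 0 := by
    rw [← Nat.cast_add, show 2*q+2*q = 4*q by omega, ZMod.natCast_self]
  have hcq : (((4*q).choose 2 : ℕ) : ZMod (4*q)) = ((2*q:ℕ) : ZMod (4*q)) := by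
    rw [hch2, Nat.cast_mul, Nat.cast_sub (by omega : 1 ≤ 4*q), ZMod.natCast_self,
      Nat.cast_one]
    linear_combination (-(1 : ZMod (4*q)))*hadd2q
  -- the power formula
  have hsp := spow_formula (4*q) T u1 u2 u3 u4 hnn hA hTa
  -- analyze T^N ∈ K
  simp only [Kgrp, Set.mem_setOf_eq] at hTb
  obtain ⟨r, s, t, hr, hs, ht, hKM, hKV⟩ := hTb
  have hMK := ((hsp (4*q)).1).symm.trans hKM
  have h01 := congr_fun (congr_fun hMK 0) 1
  simp only [Fin.zero_eta, Fin.mk_one, Matrix.of_apply, Matrix.cons_val_zero,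
    Matrix.cons_val_one, Matrix.head_cons, Fin.isValue] at h01
  have hs1 : s = 1 := by
    interval_cases s
    · exfalso
      apply hn0
      rw [show 4*q*0 = 0 by ring, Nat.cast_zero] at h01
      linear_combination h01 - u2*hnn - u3*hC3
    · rfl
  subst hs1
  have hVK := ((hsp (4*q)).2).symm.trans hKV
  have hv0 := congr_fun hVK 0
  simp only [Fin.zero_eta, Matrix.cons_val_zero, Fin.isValue] at hv0
  rw [show (4*q)/2*1 = 2*q by omega, ZMod.natCast_self, hcq] at hv0
  have hKey1 : ((2*q:ℕ) : ZMod (4*q)) * T.2 1 = ((2*q:ℕ) : ZMod (4*q)) := by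
    linear_combination hv0
  -- the (e) condition at k = l = 1
  have he11 := he 1 1 (le_refl 1) (by omega) (le_refl 1) (by omega) (by simp [Nat.ModEq])
  rw [spow_one, spow_one] at he11
  simp only [Kgrp, Set.mem_setOf_eq] at he11
  obtain ⟨r', s', t', hr', hs', ht', hM', hV'⟩ := he11
  -- staged matrix computations
  have hABl : ((T.1 : SL2 (2*(4*q))) : Matrix (Fin 2) (Fin 2) (ZMod (2*(4*q))))
      * ((R.1 : SL2 (2*(4*q))) : Matrix (Fin 2) (Fin 2) (ZMod (2*(4*q))))
      = !![((4*q:ℕ) : ZMod (2*(4*q)))*v3 + ((4*q:ℕ) : ZMod (2*(4*q)))*v1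
            - ((4*q:ℕ) : ZMod (2*(4*q)))*u2 + ((4*q:ℕ) : ZMod (2*(4*q)))*u1,
           1 + ((4*q:ℕ) : ZMod (2*(4*q)))*v4 + ((4*q:ℕ) : ZMod (2*(4*q)))*v2
            + ((4*q:ℕ) : ZMod (2*(4*q)))*u2;
           -1 + ((4*q:ℕ) : ZMod (2*(4*q)))*v3 - ((4*q:ℕ) : ZMod (2*(4*q)))*u4
            + ((4*q:ℕ) : ZMod (2*(4*q)))*u3,
           1 + ((4*q:ℕ) : ZMod (2*(4*q)))*v4 + ((4*q:ℕ) : ZMod (2*(4*q)))*u4] := by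
    rw [hA, hB, Matrix.mul_fin_two]
    ext i j
    fin_cases i <;> fin_cases j <;>
      simp only [Fin.zero_eta, Fin.mk_one, Matrix.of_apply, Matrix.cons_val_zero,
        Matrix.cons_val_one, Matrix.head_cons, Fin.isValue]
    · linear_combination (u2*v3 + u1*v1) * hnn
    · linear_combination (u2*v4 + u1*v2) * hnn
    · linear_combination (u4*v3 + u3*v1) * hnn
    · linear_combination (u4*v4 + u3*v2) * hnn
  have hABAl : ((T.1 : SL2 (2*(4*q))) : Matrix (Fin 2) (Fin 2) (ZMod (2*(4*q))))
      * ((R.1 : SL2 (2*(4*q))) : Matrix (Fin 2) (Fin 2) (ZMod (2*(4*q))))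
      * ((T.1 : SL2 (2*(4*q))) : Matrix (Fin 2) (Fin 2) (ZMod (2*(4*q))))
      = !![((4*q:ℕ) : ZMod (2*(4*q)))*v3 + ((4*q:ℕ) : ZMod (2*(4*q)))*v1
            + ((4*q:ℕ) : ZMod (2*(4*q)))*u3 - ((4*q:ℕ) : ZMod (2*(4*q)))*u2
            + ((4*q:ℕ) : ZMod (2*(4*q)))*u1,
           1 + ((4*q:ℕ) : ZMod (2*(4*q)))*v4 + ((4*q:ℕ) : ZMod (2*(4*q)))*v3
            + ((4*q:ℕ) : ZMod (2*(4*q)))*v2 + ((4*q:ℕ) : ZMod (2*(4*q)))*v1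
            + ((4*q:ℕ) : ZMod (2*(4*q)))*u4 + ((4*q:ℕ) : ZMod (2*(4*q)))*u1;
           -1 + ((4*q:ℕ) : ZMod (2*(4*q)))*v3 - ((4*q:ℕ) : ZMod (2*(4*q)))*u4
            + 2*(((4*q:ℕ) : ZMod (2*(4*q)))*u3) - ((4*q:ℕ) : ZMod (2*(4*q)))*u1,
           ((4*q:ℕ) : ZMod (2*(4*q)))*v4 + ((4*q:ℕ) : ZMod (2*(4*q)))*v3
            + ((4*q:ℕ) : ZMod (2*(4*q)))*u4 + ((4*q:ℕ) : ZMod (2*(4*q)))*u3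
            - ((4*q:ℕ) : ZMod (2*(4*q)))*u2] := by
    rw [hABl, hA, Matrix.mul_fin_two]
    ext i j
    fin_cases i <;> fin_cases j <;>
      simp only [Fin.zero_eta, Fin.mk_one, Matrix.of_apply, Matrix.cons_val_zero,
        Matrix.cons_val_one, Matrix.head_cons, Fin.isValue]
    · linear_combination (u3*v4 + u3*v2 + u2*u3 + u1*v3 + u1*v1 - u1*u2 + u1*u1) * hnn
    · linear_combination (u4*v4 + u4*v2 + u2*v3 + u2*v1 + u2*u4 - u2*u2 + u1*u2) * hnn
    · linear_combination (u3*v4 + u3*u4 + u1*v3 - u1*u4 + u1*u3) * hnn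
    · linear_combination (u4*v4 + u4*u4 + u2*v3 - u2*u4 + u2*u3) * hnn
  have hBAl : ((R.1 : SL2 (2*(4*q))) : Matrix (Fin 2) (Fin 2) (ZMod (2*(4*q))))
      * ((T.1 : SL2 (2*(4*q))) : Matrix (Fin 2) (Fin 2) (ZMod (2*(4*q))))
      = !![1 + ((4*q:ℕ) : ZMod (2*(4*q)))*v1 + ((4*q:ℕ) : ZMod (2*(4*q)))*u1,
           1 + ((4*q:ℕ) : ZMod (2*(4*q)))*v2 + ((4*q:ℕ) : ZMod (2*(4*q)))*v1
            + ((4*q:ℕ) : ZMod (2*(4*q)))*u2;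
           -1 + ((4*q:ℕ) : ZMod (2*(4*q)))*v3 + ((4*q:ℕ) : ZMod (2*(4*q)))*u3
            - ((4*q:ℕ) : ZMod (2*(4*q)))*u1,
           ((4*q:ℕ) : ZMod (2*(4*q)))*v4 + ((4*q:ℕ) : ZMod (2*(4*q)))*v3
            + ((4*q:ℕ) : ZMod (2*(4*q)))*u4 - ((4*q:ℕ) : ZMod (2*(4*q)))*u2] := by
    rw [hB, hA, Matrix.mul_fin_two]
    ext i j
    fin_cases i <;> fin_cases j <;>
      simp only [Fin.zero_eta, Fin.mk_one, Matrix.of_apply, Matrix.cons_val_zero,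
        Matrix.cons_val_one, Matrix.head_cons, Fin.isValue]
    · linear_combination (u3*v2 + u1*v1) * hnn
    · linear_combination (u4*v2 + u2*v1) * hnn
    · linear_combination (u3*v4 + u1*v3) * hnn
    · linear_combination (u4*v4 + u2*v3) * hnn
  have hBABl : ((R.1 : SL2 (2*(4*q))) : Matrix (Fin 2) (Fin 2) (ZMod (2*(4*q))))
      * ((T.1 : SL2 (2*(4*q))) : Matrix (Fin 2) (Fin 2) (ZMod (2*(4*q))))
      * ((R.1 : SL2 (2*(4*q))) : Matrix (Fin 2) (Fin 2) (ZMod (2*(4*q))))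
      = !![((4*q:ℕ) : ZMod (2*(4*q)))*v3 - ((4*q:ℕ) : ZMod (2*(4*q)))*v2
            + ((4*q:ℕ) : ZMod (2*(4*q)))*v1 - ((4*q:ℕ) : ZMod (2*(4*q)))*u2
            + ((4*q:ℕ) : ZMod (2*(4*q)))*u1,
           1 + ((4*q:ℕ) : ZMod (2*(4*q)))*v4 + 2*(((4*q:ℕ) : ZMod (2*(4*q)))*v2)
            + ((4*q:ℕ) : ZMod (2*(4*q)))*v1 + ((4*q:ℕ) : ZMod (2*(4*q)))*u2;
           -1 - ((4*q:ℕ) : ZMod (2*(4*q)))*v4 - ((4*q:ℕ) : ZMod (2*(4*q)))*v1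
            - ((4*q:ℕ) : ZMod (2*(4*q)))*u4 + ((4*q:ℕ) : ZMod (2*(4*q)))*u3
            + ((4*q:ℕ) : ZMod (2*(4*q)))*u2 - ((4*q:ℕ) : ZMod (2*(4*q)))*u1,
           ((4*q:ℕ) : ZMod (2*(4*q)))*v4 + ((4*q:ℕ) : ZMod (2*(4*q)))*v3
            - ((4*q:ℕ) : ZMod (2*(4*q)))*v2 + ((4*q:ℕ) : ZMod (2*(4*q)))*u4
            - ((4*q:ℕ) : ZMod (2*(4*q)))*u2] := by
    rw [hBAl, hB, Matrix.mul_fin_two]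
    ext i j
    fin_cases i <;> fin_cases j <;>
      simp only [Fin.zero_eta, Fin.mk_one, Matrix.of_apply, Matrix.cons_val_zero,
        Matrix.cons_val_one, Matrix.head_cons, Fin.isValue]
    · linear_combination (v2*v3 + v1*v3 + v1*v1 + u2*v3 + u1*v1) * hnn
    · linear_combination (v2*v4 + v1*v4 + v1*v2 + u2*v4 + u1*v2) * hnn
    · linear_combination (v3*v4 + v3*v3 + v1*v3 + u4*v3 + u3*v1 - u2*v3 - u1*v1) * hnn
    · linear_combination (v4*v4 + v3*v4 + v2*v3 + u4*v4 + u3*v2 - u2*v4 - u1*v2) * hnn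
  simp only [smul', sinv, Matrix.SpecialLinearGroup.coe_mul,
    Matrix.SpecialLinearGroup.coe_inv] at hM' hV'
  rw [hABAl, hBABl, Matrix.adjugate_fin_two, Matrix.mul_fin_two] at hM'
  have h01' := congr_fun (congr_fun hM' 0) 1
  have h10' := congr_fun (congr_fun hM' 1) 0
  simp only [Fin.zero_eta, Fin.mk_one, Matrix.of_apply, Matrix.cons_val_zero,
    Matrix.cons_val_one, Matrix.head_cons, Fin.isValue] at h01' h10'
  have hst : ((4*q*s' : ℕ) : ZMod (2*(4*q))) = ((4*q*t' : ℕ) : ZMod (2*(4*q))) := by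
    linear_combination (-v4*v4 - 2*v3*v4 - v2*v4 - v2*v3 - v2*v2 - v1*v4 - 2*v1*v2
      - u4*v4 - 2*u4*v2 - 3*u3*v4 - u3*v3 - 2*u3*v1 - 2*u3*u4 + u3*u3 + 2*u2*v4
      + u2*v2 + u2*u3 + 2*u1*v3 - 3*u1*v2 + u1*v1 + u1*u4 - u1*u3 - 2*u1*u2
      + u1*u1) * hnn + (-v2 - u3) * h2n - h01' + h10'
  have hst' : s' = t' := by
    interval_cases s' <;> interval_cases t'
    · rfl
    · exfalso; apply hn0
      rw [show 4*q*0 = 0 by ring, Nat.cast_zero, show 4*q*1 = 4*q by ring] at hst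
      exact hst.symm
    · exfalso; apply hn0
      rw [show 4*q*0 = 0 by ring, Nat.cast_zero, show 4*q*1 = 4*q by ring] at hst
      exact hst
    · rfl
  subst hst'
  -- vector part of (e) at k = l = 1
  simp only [redMat_mul, redMat_adjugate, hTa, hRa] at hV'
  norm_num [Matrix.mul_fin_two, Matrix.adjugate_fin_two, mulVec2] at hV'
  rw [show (4*q)/2 = 2*q by omega] at hV'
  have hw0 := hV'.1
  have hw1 := hV'.2
  simp only [Fin.zero_eta, Fin.mk_one, Pi.add_apply, Pi.neg_apply, Matrix.cons_val_zero,
    Matrix.cons_val_one, Matrix.head_cons, Fin.isValue, Matrix.vecHead, Matrix.vecTail,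
    Function.comp_apply, Fin.succ_zero_eq_one] at hw0 hw1
  have hcast0 : ((2*q : ℕ) : ZMod (4*q)) * ((s' : ℕ) : ZMod (4*q))
      + ((2*q : ℕ) : ZMod (4*q)) * ((s' : ℕ) : ZMod (4*q)) = 0 := by
    rw [← Nat.cast_mul, ← Nat.cast_add, show 2*q*s' + 2*q*s' = (4*q)*s' by ring,
      Nat.cast_mul, ZMod.natCast_self, zero_mul]
  have h2a : T.2 1 + T.2 1 = 0 := by
    linear_combination hw0 + hw1 + hcast0
  -- final contradiction
  have hc2q : ((2*q:ℕ) : ZMod (4*q)) = 2*((q:ℕ) : ZMod (4*q)) := by push_cast; ring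
  have h2q0 : ((2*q:ℕ) : ZMod (4*q)) = 0 := by
    rw [hc2q] at hKey1 ⊢
    linear_combination ((q:ℕ) : ZMod (4*q))*h2a - hKey1
  have hdvd := (ZMod.natCast_eq_zero_iff (2*q) (4*q)).mp h2q0
  have := Nat.le_of_dvd (by omega) hdvd
  omega
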